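/- arXiv:2208.07788 — 4 statements merged into one kernel-verified Lean document; each statement's English description precedes it below -/
import Mathlib

section
/- Let G be a digraph on n vertices with metric dimension 1, witnessed by a single vertex w such that the map v ↦ d(w,v) is injective on V(G) (with values in ℕ ∪ {∞}). Then either (1) G has a directed Hamiltonian path (v₁, v₂, …, v_n) such that there is no arc from v_i to v_j whenever i < j−1, or (2) G has a source vertex whose removal yields a digraph with a directed Hamiltonian path (v₁, …, v_{n−1}) with no arc from v_i to v_j whenever i < j−1. -/
/-!
Distances from `w` are pairwise distinct, and a vertex at finite distance `k + 1` has an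
in-neighbour at distance `k`. Hence the finite distances are exactly `0, …, m - 1`, and listing
the reachable vertices by distance gives `v₀, …, v_{m-1}` with `d(w, vᵢ) = i`. The in-neighbour of
`v_{i+1}` at distance `i` must be `vᵢ`, and an arc `vᵢ → vⱼ` forces `j ≤ i + 1`. By injectivity at
most one vertex is unreachable, and it is a source, since an arc into it would make it reachable.
-/

/-- A directed walk of length `n` from `u` to `v` along the arc relation `A`. -/
def IsDWalk {V : Type*} (A : V → V → Prop) {n : ℕ} (f : Fin (n + 1) → V) (u v : V) : Prop :=
  f 0 = u ∧ f (Fin.last n) = v ∧ ∀ i : Fin n, A (f i.castSucc) (f i.succ)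

/-- Directed distance: the length of a shortest directed path from `u` to `v`,
`⊤` (infinity) if there is no directed path. -/
noncomputable def ddist {V : Type*} (A : V → V → Prop) (u v : V) : ℕ∞ :=
  sInf {m : ℕ∞ | ∃ (n : ℕ) (f : Fin (n + 1) → V), IsDWalk A f u v ∧ m = (n : ℕ∞)}

open Function

def IsShortcutFreePath {V : Type*} (A : V → V → Prop) {N : ℕ} (p : Fin N → V) : Prop :=
  (∀ i j : Fin N, (i : ℕ) + 1 = (j : ℕ) → A (p i) (p j)) ∧
  (∀ i j : Fin N, (i : ℕ) + 1 < (j : ℕ) → ¬ A (p i) (p j))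

section Enumeration

variable {α : Type*} {f : α → ℕ}

theorem exists_apply_eq_of_le (hdown : ∀ a k, f a = k + 1 → ∃ b, f b = k) (a : α) :
    ∀ k ≤ f a, ∃ b, f b = k := by
  suffices ∀ m a, f a = m → ∀ k ≤ m, ∃ b, f b = k from this _ a rfl
  intro m
  induction m with
  | zero => intro a ha k hk; exact ⟨a, by omega⟩
  | succ m ih =>
    intro a ha k hk
    rcases Nat.lt_or_eq_of_le hk with hk | rfl
    · obtain ⟨b, hb⟩ := hdown a m ha
      exact ih b hb k (by omega)
    · exact ⟨a, ha⟩

theorem apply_lt_natCard [Finite α] (hdown : ∀ a k, f a = k + 1 → ∃ b, f b = k) (a : α) :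
    f a < Nat.card α := by
  choose g hg using fun k : Fin (f a + 1) => exists_apply_eq_of_le hdown a k (by omega)
  have := Nat.card_le_card_of_injective g fun i j hij => Fin.ext (by rw [← hg i, ← hg j, hij])
  simpa using this

theorem exists_equiv_fin_apply_eq [Finite α] (hf : Injective f)
    (hdown : ∀ a k, f a = k + 1 → ∃ b, f b = k) :
    ∃ e : Fin (Nat.card α) ≃ α, ∀ i, f (e i) = i := by
  let φ : α → Fin (Nat.card α) := fun a => ⟨f a, apply_lt_natCard hdown a⟩
  have hφ : Bijective φ :=
    Injective.bijective_of_nat_card_le (fun a b hab => hf (congrArg Fin.val hab)) (by simp)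
  refine ⟨(Equiv.ofBijective φ hφ).symm, fun i => ?_⟩
  exact congrArg Fin.val ((Equiv.ofBijective φ hφ).apply_symm_apply i)

end Enumeration

namespace IsDWalk

variable {V : Type*} {A : V → V → Prop} {n : ℕ} {u v x : V}

theorem snoc {f : Fin (n + 1) → V} (hf : IsDWalk A f u v) (h : A v x) :
    IsDWalk A (Fin.snoc f x : Fin (n + 2) → V) u x := by
  obtain ⟨h0, hlast, harc⟩ := hf
  refine ⟨by rw [← Fin.castSucc_zero, Fin.snoc_castSucc, h0], Fin.snoc_last _ _, fun i => ?_⟩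
  induction i using Fin.lastCases with
  | last => rwa [Fin.succ_last, Fin.snoc_last, Fin.snoc_castSucc, hlast]
  | cast i => rw [Fin.succ_castSucc, Fin.snoc_castSucc, Fin.snoc_castSucc]; exact harc i

theorem init {f : Fin (n + 2) → V} (hf : IsDWalk A f u v) :
    IsDWalk A (Fin.init f) u (f (Fin.last n).castSucc) := by
  obtain ⟨h0, -, harc⟩ := hf
  exact ⟨h0, rfl, fun i => by simpa [Fin.init, ← Fin.succ_castSucc] using harc i.castSucc⟩

end IsDWalk

section ddist

variable {V : Type*} {A : V → V → Prop} {u v x : V}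

theorem ddist_le_of_isDWalk {n : ℕ} {f : Fin (n + 1) → V} (hf : IsDWalk A f u v) :
    ddist A u v ≤ n :=
  sInf_le ⟨n, f, hf, rfl⟩

theorem exists_isDWalk_of_ddist_eq {k : ℕ} (h : ddist A u v = k) :
    ∃ f : Fin (k + 1) → V, IsDWalk A f u v := by
  have hne : {m : ℕ∞ | ∃ (n : ℕ) (f : Fin (n + 1) → V), IsDWalk A f u v ∧ m = n}.Nonempty := by
    by_contra hempty
    rw [Set.not_nonempty_iff_eq_empty] at hempty
    rw [ddist, hempty, sInf_empty] at h
    exact ENat.top_ne_natCast k h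
  obtain ⟨n, f, hf, hn⟩ := csInf_mem hne
  obtain rfl : n = k := by exact_mod_cast hn.symm.trans h
  exact ⟨f, hf⟩

theorem ddist_le_ddist_add_one (h : A v x) : ddist A u x ≤ ddist A u v + 1 := by
  cases hv : ddist A u v with
  | top => simp
  | coe k =>
    obtain ⟨f, hf⟩ := exists_isDWalk_of_ddist_eq hv
    exact_mod_cast ddist_le_of_isDWalk (hf.snoc h)

theorem ddist_eq_top_of_adj (h : A v x) (hx : ddist A u x = ⊤) : ddist A u v = ⊤ := by
  simpa [hx] using ddist_le_ddist_add_one (u := u) h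

theorem exists_adj_ddist_eq_of_ddist_eq_succ {k : ℕ} (h : ddist A u x = (k + 1 : ℕ)) :
    ∃ v, A v x ∧ ddist A u v = k := by
  obtain ⟨f, hf⟩ := exists_isDWalk_of_ddist_eq h
  refine ⟨f (Fin.last k).castSucc, by simpa [hf.2.1] using hf.2.2 (Fin.last k), ?_⟩
  refine le_antisymm (ddist_le_of_isDWalk hf.init) ?_
  have := ddist_le_ddist_add_one (u := u) (by simpa [hf.2.1] using hf.2.2 (Fin.last k))
  rw [h, Nat.cast_add, Nat.cast_one] at this
  exact (ENat.add_le_add_iff_right ENat.one_ne_top).mp this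

end ddist

section Resolving

variable {V : Type*} {A : V → V → Prop} {w : V}

theorem exists_equiv_fin_ddist_eq [Finite V] (hres : Injective (ddist A w)) :
    ∃ e : Fin (Nat.card {v // ddist A w v ≠ ⊤}) ≃ {v // ddist A w v ≠ ⊤},
      ∀ i, ddist A w (e i) = i := by
  have hinj : Injective fun v : {v // ddist A w v ≠ ⊤} => (ddist A w v).toNat :=
    fun a b hab => Subtype.ext <| hres <| by
      rw [← ENat.natCast_toNat a.2, ← ENat.natCast_toNat b.2]; exact congrArg _ hab
  have hdown (a : {v // ddist A w v ≠ ⊤}) (k : ℕ) (hk : (ddist A w a).toNat = k + 1) :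
      ∃ b : {v // ddist A w v ≠ ⊤}, (ddist A w b).toNat = k := by
    obtain ⟨v, -, hv⟩ := exists_adj_ddist_eq_of_ddist_eq_succ (by rw [← hk, ENat.natCast_toNat a.2])
    exact ⟨⟨v, hv ▸ ENat.natCast_ne_top k⟩, by simp [hv]⟩
  obtain ⟨e, he⟩ := exists_equiv_fin_apply_eq hinj hdown
  exact ⟨e, fun i => by rw [← he i, ENat.natCast_toNat (e i).2]⟩

theorem isShortcutFreePath_of_ddist_eq (hres : Injective (ddist A w)) {N : ℕ} {p : Fin N → V}
    (hp : ∀ i, ddist A w (p i) = i) : IsShortcutFreePath A p := by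
  refine ⟨fun i j hij => ?_, fun i j hij hA => ?_⟩
  · obtain ⟨v, hv, hvi⟩ := exists_adj_ddist_eq_of_ddist_eq_succ (k := i) (by rw [hp j, hij])
    rwa [← hres (hvi.trans (hp i).symm)]
  · have := ddist_le_ddist_add_one (u := w) hA
    rw [hp i, hp j] at this
    norm_cast at this
    omega

end Resolving

theorem metricDim_one_structure_general {V : Type*} [Fintype V] (A : V → V → Prop)
    (hirr : Irreflexive A)
    (n : ℕ) (hn : Fintype.card V = n)
    (w : V) (hres : Function.Injective fun v => ddist A w v) :
    (∃ e : Fin n ≃ V,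
      (∀ i j : Fin n, (i : ℕ) + 1 = (j : ℕ) → A (e i) (e j)) ∧
      (∀ i j : Fin n, (i : ℕ) + 1 < (j : ℕ) → ¬ A (e i) (e j))) ∨
    (∃ s : V, (∀ v : V, ¬ A v s) ∧
      ∃ e : Fin (n - 1) ≃ {v : V // v ≠ s},
        (∀ i j : Fin (n - 1), (i : ℕ) + 1 = (j : ℕ) → A (e i).1 (e j).1) ∧
        (∀ i j : Fin (n - 1), (i : ℕ) + 1 < (j : ℕ) → ¬ A (e i).1 (e j).1)) := by
  classical
  obtain ⟨e, he⟩ := exists_equiv_fin_ddist_eq hres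
  by_cases hreach : ∀ v, ddist A w v ≠ ⊤
  · have hcard : Nat.card {v // ddist A w v ≠ ⊤} = n := by
      rw [Nat.card_congr (Equiv.subtypeUnivEquiv hreach), Nat.card_eq_fintype_card, hn]
    let e' := (finCongr hcard.symm).trans (e.trans (Equiv.subtypeUnivEquiv hreach))
    exact Or.inl ⟨e', isShortcutFreePath_of_ddist_eq hres fun i => he _⟩
  · push Not at hreach
    obtain ⟨s, hs⟩ := hreach
    have hreach_iff (v : V) : ddist A w v ≠ ⊤ ↔ v ≠ s := hres.ne_iff' hs
    have hsource (v : V) : ¬ A v s := fun hv =>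
      hirr s (hres ((ddist_eq_top_of_adj hv hs).trans hs.symm) ▸ hv)
    have hcard : Nat.card {v // ddist A w v ≠ ⊤} = n - 1 := by
      rw [Nat.card_congr (Equiv.subtypeEquivRight hreach_iff), Nat.card_eq_fintype_card,
        Fintype.card_subtype_compl, Fintype.card_subtype_eq, hn]
    let e' := (finCongr hcard.symm).trans (e.trans (Equiv.subtypeEquivRight hreach_iff))
    exact Or.inr ⟨s, hsource, e', isShortcutFreePath_of_ddist_eq hres fun i => he _⟩

/-- If a digraph `G` (simple and oriented) on `n` vertices has metric dimension 1,
witnessed by a vertex `w` whose distance map is injective, then either `G` has a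
directed Hamiltonian path with no forward "skipping" arcs, or `G` has a source vertex
whose removal yields such a Hamiltonian path. -/
theorem metricDim_one_structure {V : Type*} [Fintype V] (A : V → V → Prop)
    (hirr : Irreflexive A) (horiented : ∀ u v : V, A u v → ¬ A v u)
    (n : ℕ) (hn : Fintype.card V = n)
    (w : V) (hres : Function.Injective fun v => ddist A w v) :
    (∃ e : Fin n ≃ V,
      (∀ i j : Fin n, (i : ℕ) + 1 = (j : ℕ) → A (e i) (e j)) ∧
      (∀ i j : Fin n, (i : ℕ) + 1 < (j : ℕ) → ¬ A (e i) (e j))) ∨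
    (∃ s : V, (∀ v : V, ¬ A v s) ∧
      ∃ e : Fin (n - 1) ≃ {v : V // v ≠ s},
        (∀ i j : Fin (n - 1), (i : ℕ) + 1 = (j : ℕ) → A (e i).1 (e j).1) ∧
        (∀ i j : Fin (n - 1), (i : ℕ) + 1 < (j : ℕ) → ¬ A (e i).1 (e j).1)) :=
  metricDim_one_structure_general A hirr n hn w hres
end

section
/- Conversely, if a digraph G on n vertices has a directed Hamiltonian path (v₁, …, v_n) with no arc from v_i to v_j whenever i < j−1, then the map v ↦ d(v₁, v) is injective on V(G), i.e., G has metric dimension 1. -/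
/-- If a digraph on `n` vertices has a directed Hamiltonian path `v₁, …, vₙ` with no arc
from `vᵢ` to `vⱼ` whenever `i < j - 1`, then the distance map from `v₁` is injective,
i.e. the digraph has metric dimension 1. -/
theorem metricDim_one_of_structure {V : Type*} [Fintype V] (A : V → V → Prop)
    (n : ℕ) (hn : Fintype.card V = n) (hn0 : 0 < n)
    (e : Fin n ≃ V)
    (hpath : ∀ i j : Fin n, (i : ℕ) + 1 = (j : ℕ) → A (e i) (e j))
    (hnoskip : ∀ i j : Fin n, (i : ℕ) + 1 < (j : ℕ) → ¬ A (e i) (e j)) :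
    Function.Injective fun v => ddist A (e ⟨0, hn0⟩) v := by
  have hstep : ∀ x y : V, A x y → ((e.symm y : Fin n) : ℕ) ≤ ((e.symm x : Fin n) : ℕ) + 1 := by
    intro x y hxy
    by_contra h
    push_neg at h
    exact hnoskip (e.symm x) (e.symm y) h (by simpa using hxy)
  have hwalk : ∀ (m : ℕ) (f : Fin (m + 1) → V) (u v : V), IsDWalk A f u v →
      ((e.symm v : Fin n) : ℕ) ≤ ((e.symm u : Fin n) : ℕ) + m := by
    intro m f u v hw
    obtain ⟨h0, hl, hs⟩ := hw
    have key : ∀ k : ℕ, (hk : k ≤ m) →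
        ((e.symm (f ⟨k, Nat.lt_succ_of_le hk⟩) : Fin n) : ℕ) ≤ ((e.symm u : Fin n) : ℕ) + k := by
      intro k
      induction k with
      | zero =>
        intro _
        have : (⟨0, Nat.lt_succ_of_le (Nat.zero_le m)⟩ : Fin (m + 1)) = 0 := rfl
        simp [this, h0]
      | succ k ih =>
        intro hk
        have h1 := ih (Nat.le_of_succ_le hk)
        have h2 := hstep _ _ (hs ⟨k, hk⟩)
        have e1 : (⟨k, hk⟩ : Fin m).castSucc = ⟨k, Nat.lt_succ_of_le (Nat.le_of_succ_le hk)⟩ := rfl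
        have e2 : (⟨k, hk⟩ : Fin m).succ = ⟨k + 1, Nat.succ_lt_succ hk⟩ := rfl
        rw [e1, e2] at h2
        omega
    have := key m le_rfl
    have hlast : (⟨m, Nat.lt_succ_of_le le_rfl⟩ : Fin (m + 1)) = Fin.last m := rfl
    rw [hlast, hl] at this
    exact this
  have hdd : ∀ j : Fin n, ddist A (e ⟨0, hn0⟩) (e j) = ((j : ℕ) : ℕ∞) := by
    intro j
    apply le_antisymm
    · apply sInf_le
      refine ⟨(j : ℕ), fun k => e ⟨(k : ℕ), lt_of_le_of_lt (Nat.lt_succ_iff.mp k.isLt) j.isLt⟩,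
        ⟨?_, ?_, ?_⟩, rfl⟩
      · simp
      · exact congrArg e (Fin.ext (by simp [Fin.last]))
      · intro i
        exact hpath _ _ rfl
    · apply le_sInf
      rintro m ⟨n', f, hw, rfl⟩
      have := hwalk n' f _ _ hw
      simp only [Equiv.symm_apply_apply] at this
      exact_mod_cast by omega
  intro a b hab
  simp only at hab
  have ha := hdd (e.symm a)
  have hb := hdd (e.symm b)
  rw [e.apply_symm_apply] at ha hb
  rw [ha, hb] at hab
  have : ((e.symm a : Fin n) : ℕ) = ((e.symm b : Fin n) : ℕ) := by exact_mod_cast hab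
  have : e.symm a = e.symm b := Fin.ext this
  simpa using congrArg e this
end

section
/- Let G be a digraph on n vertices such that for every pair of distinct vertices x, y, at least cn vertices w satisfy d(w,x) ≠ d(w,y) (distances taken in ℕ ∪ {∞}). Then the metric dimension of G is at most (1 + 2 log n)/c. -/
/-- If in a digraph `G` on `n` vertices every pair of distinct vertices `x, y` is
distinguished by at least `c * n` vertices `w` (meaning `d(w,x) ≠ d(w,y)`), then the
metric dimension of `G` is at most `(1 + 2 log n) / c`: there is a resolving set of
cardinality at most `(1 + 2 log n) / c`. -/
theorem metricDim_le_of_many_distinguishers {V : Type*} [Fintype V]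
    (A : V → V → Prop) (n : ℕ) (hn : Fintype.card V = n)
    (c : ℝ) (hc : 0 < c)
    (hdist : ∀ x y : V, x ≠ y →
      c * n ≤ (Nat.card {w : V // ddist A w x ≠ ddist A w y} : ℝ)) :
    ∃ S : Finset V, ((S.card : ℝ) ≤ (1 + 2 * Real.log n) / c) ∧
      ∀ x y : V, (∀ w ∈ S, ddist A w x = ddist A w y) → x = y := by
  classical
  have hlog : 0 ≤ Real.log n := by
    rcases Nat.eq_zero_or_pos n with h | h
    · simp [h]
    · exact Real.log_nonneg (by exact_mod_cast h)
  have hrhs : 0 ≤ (1 + 2 * Real.log n) / c := div_nonneg (by linarith) hc.le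
  rcases le_or_gt n 1 with h1 | h2
  · refine ⟨∅, by simpa using hrhs, ?_⟩
    intro x y _
    have hcard : Fintype.card V ≤ 1 := hn ▸ h1
    exact Fintype.card_le_one_iff.mp hcard x y
  -- now n ≥ 2
  have hn0 : (0 : ℝ) < n := by exact_mod_cast (by omega : 0 < n)
  have hVne : Nonempty V := by
    rw [← Fintype.card_pos_iff, hn]; omega
  have hdist' : ∀ x y : V, x ≠ y →
      c * n ≤ ((Finset.univ.filter (fun w => ddist A w x ≠ ddist A w y)).card : ℝ) := by
    intro x y hxy
    have h := hdist x y hxy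
    rwa [Nat.card_eq_fintype_card, Fintype.card_subtype] at h
  have hc1 : c ≤ 1 := by
    obtain ⟨x, y, hxy⟩ := Fintype.exists_pair_of_one_lt_card (by omega : 1 < Fintype.card V)
    have h1 := hdist' x y hxy
    have h2 : ((Finset.univ.filter (fun w => ddist A w x ≠ ddist A w y)).card : ℝ) ≤ n := by
      have hle := Finset.card_filter_le (Finset.univ : Finset V)
        (fun w => ddist A w x ≠ ddist A w y)
      have h3 : (Finset.univ : Finset V).card = n := by simpa using hn
      rw [h3] at hle
      exact_mod_cast hle
    nlinarith
  set unres : Finset V → Finset (V × V) := fun S =>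
    Finset.univ.filter (fun p : V × V => p.1 ≠ p.2 ∧ ∀ w ∈ S, ddist A w p.1 = ddist A w p.2)
    with hunres
  have key : ∀ k : ℕ, ∃ S : Finset V, S.card ≤ k ∧
      ((unres S).card : ℝ) ≤ (n : ℝ) ^ 2 * (1 - c) ^ k := by
    intro k
    induction k with
    | zero =>
      refine ⟨∅, le_rfl, ?_⟩
      have h1 : (unres ∅).card ≤ Fintype.card (V × V) := by
        simpa using Finset.card_filter_le (Finset.univ : Finset (V × V)) _
      have h2 : Fintype.card (V × V) = n * n := by simp [hn]
      rw [h2] at h1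
      have h3 : ((unres ∅).card : ℝ) ≤ (n : ℝ) * n := by exact_mod_cast h1
      calc ((unres ∅).card : ℝ) ≤ (n : ℝ) * n := h3
        _ = (n : ℝ) ^ 2 * (1 - c) ^ 0 := by ring
    | succ k ih =>
      obtain ⟨S, hSk, hU⟩ := ih
      set U := unres S with hUdef
      rcases eq_or_ne U ∅ with hUe | hUne
      · refine ⟨S, hSk.trans (Nat.le_succ k), ?_⟩
        rw [← hUdef, hUe]
        simp only [Finset.card_empty, Nat.cast_zero]
        have : (0:ℝ) ≤ 1 - c := by linarith
        positivity
      -- averaging argument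
      have hsum : ((U.card : ℝ)) * (c * n) ≤
          ∑ w : V, ((U.filter (fun p => ddist A w p.1 ≠ ddist A w p.2)).card : ℝ) := by
        have hswap : ∑ w : V, (U.filter (fun p => ddist A w p.1 ≠ ddist A w p.2)).card
            = ∑ p ∈ U, (Finset.univ.filter
                (fun w => ddist A w p.1 ≠ ddist A w p.2)).card := by
          simp only [Finset.card_filter]
          exact Finset.sum_comm
        have hterm : ∀ p ∈ U, c * n ≤
            ((Finset.univ.filter (fun w => ddist A w p.1 ≠ ddist A w p.2)).card : ℝ) := by
          intro p hp
          have hp' := Finset.mem_filter.mp hp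
          exact hdist' p.1 p.2 hp'.2.1
        calc ((U.card : ℝ)) * (c * n) = ∑ _p ∈ U, (c * n) := by
              rw [Finset.sum_const]; ring
          _ ≤ ∑ p ∈ U, ((Finset.univ.filter
                (fun w => ddist A w p.1 ≠ ddist A w p.2)).card : ℝ) :=
              Finset.sum_le_sum hterm
          _ = ∑ w : V, ((U.filter (fun p => ddist A w p.1 ≠ ddist A w p.2)).card : ℝ) := by
              rw [← Nat.cast_sum, ← Nat.cast_sum, hswap]
      have hexists : ∃ w : V, c * U.card ≤
          ((U.filter (fun p => ddist A w p.1 ≠ ddist A w p.2)).card : ℝ) := by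
        by_contra hcon
        push_neg at hcon
        have hne : (Finset.univ : Finset V).Nonempty := Finset.univ_nonempty
        have hlt := Finset.sum_lt_sum_of_nonempty hne (fun w _ => hcon w)
        rw [Finset.sum_const] at hlt
        have hcardV : (Finset.univ : Finset V).card = n := by simpa using hn
        rw [hcardV, nsmul_eq_mul] at hlt
        nlinarith [hsum, hlt]
      obtain ⟨w, hw⟩ := hexists
      refine ⟨insert w S, ?_, ?_⟩
      · exact (Finset.card_insert_le w S).trans (Nat.succ_le_succ hSk)
      · have hsplit : unres (insert w S) =
            U.filter (fun p => ¬ (ddist A w p.1 ≠ ddist A w p.2)) := by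
          ext p
          simp only [hunres, hUdef, Finset.mem_filter, Finset.mem_univ, true_and,
            Finset.mem_insert, not_not]
          constructor
          · rintro ⟨h1, h2⟩
            exact ⟨⟨h1, fun w' hw' => h2 w' (Or.inr hw')⟩, h2 w (Or.inl rfl)⟩
          · rintro ⟨⟨h1, h2⟩, h3⟩
            refine ⟨h1, fun w' hw' => ?_⟩
            rcases hw' with rfl | hw'
            · exact h3
            · exact h2 w' hw'
        have hcardsplit :
            (U.filter (fun p => ddist A w p.1 ≠ ddist A w p.2)).card +
            (U.filter (fun p => ¬ (ddist A w p.1 ≠ ddist A w p.2))).card = U.card :=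
          Finset.card_filter_add_card_filter_not _
        have h1c : (0:ℝ) ≤ 1 - c := by linarith
        have hnewcard : ((unres (insert w S)).card : ℝ) ≤ (1 - c) * U.card := by
          rw [hsplit]
          have : ((U.filter (fun p => ¬ (ddist A w p.1 ≠ ddist A w p.2))).card : ℝ)
              = (U.card : ℝ) - (U.filter (fun p => ddist A w p.1 ≠ ddist A w p.2)).card := by
            have := hcardsplit
            push_cast [← this]
            ring
          rw [this]
          linarith
        calc ((unres (insert w S)).card : ℝ) ≤ (1 - c) * U.card := hnewcard
          _ ≤ (1 - c) * ((n : ℝ) ^ 2 * (1 - c) ^ k) := by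
              exact mul_le_mul_of_nonneg_left hU h1c
          _ = (n : ℝ) ^ 2 * (1 - c) ^ (k + 1) := by ring
  obtain ⟨S, hSk, hUS⟩ := key ⌊(1 + 2 * Real.log n) / c⌋₊
  refine ⟨S, ?_, ?_⟩
  · calc (S.card : ℝ) ≤ (⌊(1 + 2 * Real.log n) / c⌋₊ : ℝ) := by exact_mod_cast hSk
      _ ≤ (1 + 2 * Real.log n) / c := Nat.floor_le hrhs
  · -- show the unresolved set is empty
    have hk : 2 * Real.log n < c * (⌊(1 + 2 * Real.log n) / c⌋₊ : ℝ) := by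
      have hfloor : (1 + 2 * Real.log n) / c - 1 < (⌊(1 + 2 * Real.log n) / c⌋₊ : ℝ) :=
        Nat.sub_one_lt_floor _
      have hmul : c * ((1 + 2 * Real.log n) / c) = 1 + 2 * Real.log n :=
        mul_div_cancel₀ _ hc.ne'
      nlinarith [mul_lt_mul_of_pos_left hfloor hc]
    set k := ⌊(1 + 2 * Real.log n) / c⌋₊ with hkdef
    have hec : (1 - c) ^ k ≤ Real.exp (-(c * k)) := by
      calc (1 - c) ^ k ≤ (Real.exp (-c)) ^ k := by
            apply pow_le_pow_left₀ (by linarith)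
            linarith [Real.add_one_le_exp (-c)]
        _ = Real.exp (-(c * k)) := by
            rw [← Real.exp_nat_mul]; ring_nf
    have hn2 : (n : ℝ) ^ 2 = Real.exp (2 * Real.log n) := by
      rw [two_mul, Real.exp_add, Real.exp_log hn0]
      ring
    have hlt1 : (n : ℝ) ^ 2 * (1 - c) ^ k < 1 := by
      calc (n : ℝ) ^ 2 * (1 - c) ^ k ≤ Real.exp (2 * Real.log n) * Real.exp (-(c * k)) := by
            rw [hn2]
            exact mul_le_mul_of_nonneg_left hec (Real.exp_pos _).le
        _ = Real.exp (2 * Real.log n - c * k) := by rw [← Real.exp_add]; ring_nf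
        _ < Real.exp 0 := by apply Real.exp_lt_exp.mpr; linarith
        _ = 1 := Real.exp_zero
    have hcard0 : (unres S).card = 0 := by
      have : ((unres S).card : ℝ) < 1 := lt_of_le_of_lt hUS hlt1
      exact_mod_cast Nat.lt_one_iff.mp (by exact_mod_cast this)
    intro x y hxy
    by_contra hne
    have hmem : (x, y) ∈ unres S := by
      rw [hunres]
      exact Finset.mem_filter.mpr ⟨Finset.mem_univ _, hne, hxy⟩
    have := Finset.card_pos.mpr ⟨(x, y), hmem⟩
    omega
end

section
/- Let G be a digraph with out-degeneracy k, i.e., G has a subgraph H with minimum out-degree δ⁺(H) ≥ k. Let M(G) = max over u,v ∈ V(G) of (max_{w ∈ N⁺[v]} d(u,w) − min_{w ∈ N⁺[v]} d(u,w)) + 1 (assumed finite). Then for any m < log_{M(G)}(k+1) and any placement of m vertices u₁,…,u_m and any vertex v of H, there exist two distinct vertices w₁, w₂ ∈ N⁺_H[v] with d(u_i, w₁) = d(u_i, w₂) for all i. -/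
/-- Pigeonhole core of the lower bound `ζ(G) ≥ log_{M(G)}(k+1)`.
Let `G` be a loopless digraph with a subgraph witnessing out-degeneracy `k`, given by a
vertex set `S` in which every vertex has at least `k` out-neighbors inside `S`.
Suppose `M` bounds the spread of distances on closed out-neighborhoods: for all `u, v`
and all `w₁, w₂ ∈ N⁺[v]`, `d(u,w₁) < d(u,w₂) + M` (this forces the relevant distances
to be finite, i.e. `M(G)` is finite and at most `M`). If `M ^ m < k + 1`
(i.e. `m < log_M (k+1)`), then for any `m` cop positions `u₁, …, u_m` and any vertex
`v ∈ S`, two distinct vertices of the closed out-neighborhood of `v` in the subgraph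
have identical distance vectors. -/
theorem degeneracy_pigeonhole {V : Type*} [Fintype V] (A : V → V → Prop)
    (hirr : Irreflexive A) (k : ℕ) (S : Finset V)
    (hdeg : ∀ v ∈ S, k ≤ Nat.card {w : V // w ∈ S ∧ A v w})
    (M : ℕ)
    (hM : ∀ u v w₁ w₂ : V, (w₁ = v ∨ A v w₁) → (w₂ = v ∨ A v w₂) →
      ddist A u w₁ < ddist A u w₂ + (M : ℕ∞))
    (m : ℕ) (hm : M ^ m < k + 1)
    (u : Fin m → V) (v : V) (hv : v ∈ S) :
    ∃ w₁ w₂ : V, w₁ ≠ w₂ ∧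
      (w₁ = v ∨ (w₁ ∈ S ∧ A v w₁)) ∧ (w₂ = v ∨ (w₂ ∈ S ∧ A v w₂)) ∧
      ∀ i : Fin m, ddist A (u i) w₁ = ddist A (u i) w₂ := by
  classical
  -- the closed out-neighborhood inside S
  set T : Finset V := insert v (S.filter (A v)) with hT
  have hmemT : ∀ w, w ∈ T ↔ (w = v ∨ (w ∈ S ∧ A v w)) := by
    intro w
    simp [hT, Finset.mem_insert, Finset.mem_filter]
  -- membership in T gives the neighborhood condition for hM
  have hmemT' : ∀ w ∈ T, w = v ∨ A v w := by
    intro w hw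
    rcases (hmemT w).1 hw with h | h
    · exact Or.inl h
    · exact Or.inr h.2
  have hvT : v ∈ T := Finset.mem_insert_self _ _
  -- |T| ≥ k + 1
  have hcard : k + 1 ≤ T.card := by
    have h1 : k ≤ (S.filter (A v)).card := by
      have := hdeg v hv
      have : Nat.card {w : V // w ∈ S ∧ A v w} = (S.filter (A v)).card := by
        rw [Nat.card_eq_fintype_card]
        rw [Fintype.card_subtype]
        congr 1
        ext w
        simp [Finset.mem_filter]
      omega
    have h2 : v ∉ S.filter (A v) := by
      simp [Finset.mem_filter]
      intro _
      exact hirr v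
    rw [hT, Finset.card_insert_of_notMem h2]
    omega
  -- all relevant distances are finite
  have hfin : ∀ (x : V) (w : V), w ∈ T → ddist A x w ≠ ⊤ := by
    intro x w hw
    intro htop
    have := hM x v w w (hmemT' w hw) (hmemT' w hw)
    rw [htop] at this
    simp at this
  -- M ≥ 1
  have hMpos : 1 ≤ M := by
    by_contra h
    push_neg at h
    interval_cases M
    have := hM v v v v (Or.inl rfl) (Or.inl rfl)
    simp at this
  -- the natural-number distance
  set D : Fin m → V → ℕ := fun i w => (ddist A (u i) w).toNat with hD
  have hDeq : ∀ (i : Fin m) (w₁ w₂ : V), w₁ ∈ T → w₂ ∈ T → D i w₁ = D i w₂ →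
      ddist A (u i) w₁ = ddist A (u i) w₂ := by
    intro i w₁ w₂ h1 h2 h
    have e1 := ENat.coe_toNat (hfin (u i) w₁ h1)
    have e2 := ENat.coe_toNat (hfin (u i) w₂ h2)
    rw [← e1, ← e2, hD] at *
    exact_mod_cast congrArg (Nat.cast : ℕ → ℕ∞) h
  -- baseline: minimum distance over T
  have hTne : (T.image fun w => (0:ℕ)).Nonempty → True := fun _ => trivial
  have hTnonempty : T.Nonempty := ⟨v, hvT⟩
  set b : Fin m → ℕ := fun i => (T.image (D i)).min' (hTnonempty.image _) with hb
  have hble : ∀ (i : Fin m) (w : V), w ∈ T → b i ≤ D i w := by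
    intro i w hw
    exact Finset.min'_le _ _ (Finset.mem_image_of_mem _ hw)
  have hspread : ∀ (i : Fin m) (w : V), w ∈ T → D i w - b i < M := by
    intro i w hw
    obtain ⟨w0, hw0, hw0eq⟩ := Finset.mem_image.1 ((T.image (D i)).min'_mem (hTnonempty.image _))
    have hlt := hM (u i) v w w0 (hmemT' w hw) (hmemT' w0 hw0)
    have e1 := ENat.coe_toNat (hfin (u i) w hw)
    have e2 := ENat.coe_toNat (hfin (u i) w0 hw0)
    rw [← e1, ← e2] at hlt
    rw [← Nat.cast_add] at hlt
    have hlt' : D i w < D i w0 + M := by exact_mod_cast hlt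
    have hbeq : b i = D i w0 := hw0eq.symm
    omega
  -- the pigeonhole map
  set f : V → (Fin m → ℕ) := fun w i => D i w - b i with hf
  have hcards : (Fintype.piFinset fun _ : Fin m => Finset.range M).card < T.card := by
    rw [Fintype.card_piFinset]
    simp only [Finset.card_range, Finset.prod_const, Finset.card_univ, Fintype.card_fin]
    omega
  have hmaps : ∀ w ∈ T, f w ∈ Fintype.piFinset fun _ : Fin m => Finset.range M := by
    intro w hw
    rw [Fintype.mem_piFinset]
    intro i
    rw [Finset.mem_range]
    exact hspread i w hw
  obtain ⟨w₁, hw₁, w₂, hw₂, hne, heq⟩ :=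
    Finset.exists_ne_map_eq_of_card_lt_of_maps_to hcards hmaps
  refine ⟨w₁, w₂, hne, (hmemT w₁).1 hw₁, (hmemT w₂).1 hw₂, ?_⟩
  intro i
  apply hDeq i w₁ w₂ hw₁ hw₂
  have h1 := hble i w₁ hw₁
  have h2 := hble i w₂ hw₂
  have := congrFun heq i
  simp only [hf] at this
  omega
end
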